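/- Let $(A,*_A,P,\omega)$ be a Rota-Baxter commutative associative algebra with a nondegenerate Connes cocycle of weight $\lambda$, and let $\circ_A$ be the Zinbiel product defined by $\omega(x\circ_A y,z)=\omega(y,x*_A z)$. Then $P$ is a Rota-Baxter operator of weight $\lambda$ on the Zinbiel algebra $(A,\circ_A)$; hence $(A,\circ_A,P,\omega)$ is a quadratic Rota-Baxter Zinbiel algebra of weight $\lambda$. -/

import Mathlib

/-!
Summing the defining relation `ω(x ∘ y, z) = ω(y, x * z)` over both orders and comparing with the
Connes cocycle condition shows that `∘` splits the commutative product: `x ∘ y + y ∘ x = x * y`.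
The Zinbiel identity and the invariance of `ω` then follow at once. For the Rota-Baxter identity,
the compatibility says that the `ω`-adjoint of `P` is `-P - λ`, which moves the Rota-Baxter
identity of `*` through the defining relation to that of `∘`.
-/

def IsRotaBaxter {R M : Type*} [CommRing R] [AddCommGroup M] [Module R M]
    (mul : M →ₗ[R] M →ₗ[R] M) (P : M →ₗ[R] M) (l : R) : Prop :=
  ∀ x y : M, mul (P x) (P y) = P (mul (P x) y + mul x (P y) + l • mul x y)

section

variable {R M : Type*} [CommRing R] [AddCommGroup M] [Module R M]
  {mul circ : M →ₗ[R] M →ₗ[R] M} {ω : M →ₗ[R] M →ₗ[R] R}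

theorem LinearMap.SeparatingLeft.eq_of_forall_apply_eq (hω : ω.SeparatingLeft) {a b : M}
    (h : ∀ z, ω a z = ω b z) : a = b :=
  LinearMap.ker_eq_bot.mp (LinearMap.separatingLeft_iff_ker_eq_bot.mp hω) (LinearMap.ext h)

theorem circ_add_circ_swap (hω : ω.SeparatingLeft) (hskew : ∀ x y, ω x y = -ω y x)
    (hcomm : ∀ x y, mul x y = mul y x)
    (hcc : ∀ x y z, ω (mul x y) z + ω (mul y z) x + ω (mul z x) y = 0)
    (hdef : ∀ x y z, ω (circ x y) z = ω y (mul x z)) (x y : M) :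
    circ x y + circ y x = mul x y := by
  refine hω.eq_of_forall_apply_eq fun z ↦ ?_
  have hcc' := hcc x y z
  rw [hcomm z x] at hcc'
  simp only [map_add, LinearMap.add_apply, hdef]
  linear_combination hskew y (mul x z) + hskew x (mul y z) - hcc'

theorem circ_assoc_of_circ_add_circ_swap (hω : ω.SeparatingLeft)
    (hcomm : ∀ x y, mul x y = mul y x) (hassoc : ∀ x y z, mul (mul x y) z = mul x (mul y z))
    (hdef : ∀ x y z, ω (circ x y) z = ω y (mul x z))
    (hsplit : ∀ x y, circ x y + circ y x = mul x y) (x y z : M) :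
    circ x (circ y z) = circ (circ x y + circ y x) z :=
  hω.eq_of_forall_apply_eq fun w ↦ by rw [hdef, hdef, hsplit, hdef, hcomm x y, hassoc]

theorem isRotaBaxter_circ (hω : ω.SeparatingLeft) {P : M →ₗ[R] M} {l : R}
    (hP : IsRotaBaxter mul P l) (hcompat : ∀ x y, ω (P x) y + ω x (P y) + l • ω x y = 0)
    (hdef : ∀ x y z, ω (circ x y) z = ω y (mul x z)) :
    IsRotaBaxter circ P l := by
  intro x y
  refine hω.eq_of_forall_apply_eq fun z ↦ ?_
  have c₁ := hcompat (circ (P x) y) z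
  have c₂ := hcompat (circ x (P y)) z
  have c₃ := hcompat (circ x y) z
  have c₄ := hcompat y (mul (P x) z + mul x (P z) + l • mul x z)
  simp only [hdef, hP x z, map_add, map_smul, LinearMap.add_apply, LinearMap.smul_apply,
    smul_eq_mul] at c₁ c₂ c₃ c₄ ⊢
  linear_combination c₄ - c₁ - c₂ - l * c₃

end

/-- Let `(A, *, P, ω)` be a Rota-Baxter commutative associative algebra with a
nondegenerate Connes cocycle of weight `λ`, and let `∘` be the Zinbiel product defined by
`ω(x ∘ y, z) = ω(y, x * z)`.  Then `P` is a Rota-Baxter operator of weight `λ` on the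
Zinbiel algebra `(A, ∘)`; hence `(A, ∘, P, ω)` is a quadratic Rota-Baxter Zinbiel algebra
of weight `λ`. -/
theorem rb_connes_cocycle_to_quadratic_rb_zinbiel {K : Type*} [Field K] {A : Type*}
    [AddCommGroup A] [Module K A]
    (smul : A →ₗ[K] A →ₗ[K] A)
    (hcomm : ∀ x y : A, smul x y = smul y x)
    (hassoc : ∀ x y z : A, smul (smul x y) z = smul x (smul y z))
    (P : A →ₗ[K] A) (l : K)
    (hP : ∀ x y : A, smul (P x) (P y) = P (smul (P x) y + smul x (P y) + l • smul x y))
    (ω : A →ₗ[K] A →ₗ[K] K)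
    (hskew : ∀ x y : A, ω x y = -ω y x)
    (hnd : ∀ x : A, (∀ y : A, ω x y = 0) → x = 0)
    (hcc : ∀ x y z : A, ω (smul x y) z + ω (smul y z) x + ω (smul z x) y = 0)
    (hcompat : ∀ x y : A, ω (P x) y + ω x (P y) + l • ω x y = 0)
    (circ : A →ₗ[K] A →ₗ[K] A)
    (hdef : ∀ x y z : A, ω (circ x y) z = ω y (smul x z)) :
    (∀ x y : A, circ (P x) (P y) = P (circ (P x) y + circ x (P y) + l • circ x y)) ∧
    (∀ x y z : A, circ x (circ y z) = circ (circ x y + circ y x) z) ∧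
    (∀ x y z : A, ω (circ x y) z = ω y (circ x z + circ z x)) := by
  have hω : ω.SeparatingLeft := hnd
  have hsplit := circ_add_circ_swap hω hskew hcomm hcc hdef
  refine ⟨isRotaBaxter_circ hω hP hcompat hdef,
    circ_assoc_of_circ_add_circ_swap hω hcomm hassoc hdef hsplit, fun x y z ↦ ?_⟩
  rw [hsplit x z]
  exact hdef x y z
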